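/- arXiv:2004.11618 — 4 statements merged into one kernel-verified Lean document; each statement's English description precedes it below -/
import Mathlib

section
/- Let G₁, G₂, G₃ be groups and let H be a subgroup of G₁ × G₂ × G₃ whose projection onto G₁ × G₂ (forgetting the third coordinate) is all of G₁ × G₂ and whose projection onto G₃ is all of G₃. Let N₃ = { g₃ ∈ G₃ : (1, 1, g₃) ∈ H }. Then the subgroup G₁ × {1} × {1} is contained in H if and only if for every (g₁, g₂, g₃) ∈ H with g₂ = 1 one has g₃ ∈ N₃. -/
theorem Subgroup.mk_one_mem_iff_one_mk_mem {G K : Type*} [Group G] [Group K]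
    {H : Subgroup (G × K)} {g : G} {k : K} (hgk : (g, k) ∈ H) :
    ((g, 1) : G × K) ∈ H ↔ ((1, k) : G × K) ∈ H := by
  constructor
  · intro hg
    simpa using H.mul_mem (H.inv_mem hg) hgk
  · intro hk
    simpa using H.mul_mem hgk (H.inv_mem hk)

theorem stmt_5_general {G₁ G₂ G₃ : Type*} [Group G₁] [Group G₂] [Group G₃]
    (H : Subgroup (G₁ × G₂ × G₃))
    (hsurj₁₂ : ∀ p : G₁ × G₂, ∃ h ∈ H, (h.1, h.2.1) = p) :
    (∀ g₁ : G₁, ((g₁, 1, 1) : G₁ × G₂ × G₃) ∈ H) ↔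
      (∀ h ∈ H, h.2.1 = 1 → (((1 : G₁), (1 : G₂), h.2.2) : G₁ × G₂ × G₃) ∈ H) := by
  constructor
  · rintro hall ⟨g₁, g₂, g₃⟩ hH (rfl : g₂ = 1)
    exact (Subgroup.mk_one_mem_iff_one_mk_mem hH).1 (hall g₁)
  · intro hcond g₁
    obtain ⟨⟨g₁', g₂, g₃⟩, hH, hp⟩ := hsurj₁₂ (g₁, 1)
    obtain ⟨rfl, rfl⟩ := Prod.mk.inj hp
    exact (Subgroup.mk_one_mem_iff_one_mk_mem hH).2 (hcond _ hH rfl)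

/-- Let `H ≤ G₁ × G₂ × G₃` project onto all of `G₁ × G₂` (first two
coordinates) and onto all of `G₃`, and let `N₃ = {g₃ : (1,1,g₃) ∈ H}`.  Then
`G₁ × {1} × {1} ≤ H` if and only if every `(g₁, g₂, g₃) ∈ H` with `g₂ = 1`
has `g₃ ∈ N₃`. -/
theorem stmt_5 {G₁ G₂ G₃ : Type*} [Group G₁] [Group G₂] [Group G₃]
    (H : Subgroup (G₁ × G₂ × G₃))
    (hsurj₁₂ : ∀ p : G₁ × G₂, ∃ h ∈ H, (h.1, h.2.1) = p)
    (hsurj₃ : ∀ g₃ : G₃, ∃ h ∈ H, h.2.2 = g₃) :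
    (∀ g₁ : G₁, ((g₁, 1, 1) : G₁ × G₂ × G₃) ∈ H) ↔
      (∀ h ∈ H, h.2.1 = 1 → (((1 : G₁), (1 : G₂), h.2.2) : G₁ × G₂ × G₃) ∈ H) :=
  stmt_5_general H hsurj₁₂
end

section
/- Let α be a finite set, H a subgroup of the symmetric group Sym(α), and let A and C be disjoint direct factors of H, with Γ = Supp(A) and Δ = Supp(C). Then for every a ∈ A there exists a' ∈ A such that a'(x) = a(x) for all x ∈ Γ ∩ Δ and a'(x) = x for all x ∉ Γ ∩ Δ. (In other words, A = A|_{Γ∖Δ} × A|_{Γ∩Δ} is a disjoint direct product decomposition of A.) -/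
/-! Project `a` onto `C` and the result back onto `A`: on `Γ ∩ Δ` both projections keep `a`,
on `Γ ∖ Δ` the projection onto `C` is the identity, and outside `Γ` the one onto `A` is. -/

/-- The support of a subgroup `A ≤ Sym(α)`: the union of the supports of its
elements, i.e. the set of points moved by some element of `A`. -/
def Supp {α : Type*} (A : Subgroup (Equiv.Perm α)) : Set α :=
  {x : α | ∃ a ∈ A, a x ≠ x}

/-- `A` is a disjoint direct factor of `H`: `A ≤ H` and, for every `h ∈ H`, the map
agreeing with `h` on `Supp A` and fixing every point outside `Supp A` is a
permutation belonging to `A`.  (Every element of `A` is supported in `Supp A` by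
the definition of `Supp`.) -/
def IsDisjointDirectFactor {α : Type*} (H A : Subgroup (Equiv.Perm α)) : Prop :=
  A ≤ H ∧ ∀ h ∈ H, ∃ a ∈ A, (∀ x ∈ Supp A, a x = h x) ∧ ∀ x ∉ Supp A, a x = x

theorem stmt_7_general {α : Type*} (H A C : Subgroup (Equiv.Perm α))
    (hA : IsDisjointDirectFactor H A) (hC : IsDisjointDirectFactor H C) :
    ∀ a ∈ A, ∃ a' ∈ A,
      (∀ x ∈ Supp A ∩ Supp C, a' x = a x) ∧ ∀ x ∉ Supp A ∩ Supp C, a' x = x := by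
  intro a ha
  obtain ⟨hAH, projA⟩ := hA
  obtain ⟨hCH, projC⟩ := hC
  obtain ⟨c, hcC, hc_on, hc_off⟩ := projC a (hAH ha)
  obtain ⟨a', ha'A, ha'_on, ha'_off⟩ := projA c (hCH hcC)
  refine ⟨a', ha'A, fun x ⟨hxA, hxC⟩ => by rw [ha'_on x hxA, hc_on x hxC], fun x hx => ?_⟩
  by_cases hxA : x ∈ Supp A
  · rw [ha'_on x hxA, hc_off x fun hxC => hx ⟨hxA, hxC⟩]
  · exact ha'_off x hxA

/-- Let `A` and `C` be disjoint direct factors of `H ≤ Sym(α)`,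
`Γ = Supp A`, `Δ = Supp C`.  Then for every `a ∈ A` there is `a' ∈ A` agreeing with
`a` on `Γ ∩ Δ` and fixing every point outside `Γ ∩ Δ`; in other words
`A = A|_{Γ∖Δ} × A|_{Γ∩Δ}` is a disjoint direct product decomposition of `A`. -/
theorem stmt_7 {α : Type*} [Finite α] (H A C : Subgroup (Equiv.Perm α))
    (hA : IsDisjointDirectFactor H A) (hC : IsDisjointDirectFactor H C) :
    ∀ a ∈ A, ∃ a' ∈ A,
      (∀ x ∈ Supp A ∩ Supp C, a' x = a x) ∧ ∀ x ∉ Supp A ∩ Supp C, a' x = x :=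
  stmt_7_general H A C hA hC
end

section
/- Let α be a finite set and H a subgroup of Sym(α). Suppose (H₁, …, H_r) and (K₁, …, K_s) are two finest disjoint direct product decompositions of H. Then the set of sets { Supp(H_i) : 1 ≤ i ≤ r } equals the set of sets { Supp(K_j) : 1 ≤ j ≤ s }. In other words, up to equivalence there is a unique finest disjoint direct product decomposition of H. -/
/-- A disjoint direct product decomposition of `H ≤ Sym(α)`: a family of nontrivial
subgroups with pairwise disjoint supports whose join is `H`. -/
def IsDDPDecomposition {α : Type*} (H : Subgroup (Equiv.Perm α)) {r : ℕ}
    (F : Fin r → Subgroup (Equiv.Perm α)) : Prop :=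
  (∀ i, F i ≠ ⊥) ∧ (∀ i j, i ≠ j → Disjoint (Supp (F i)) (Supp (F j))) ∧
    (⨆ i, F i) = H

/-- `K` is d.d.p. indecomposable: it admits no disjoint direct product decomposition
with more than one (nontrivial) factor. -/
def DDPIndecomposable {α : Type*} (K : Subgroup (Equiv.Perm α)) : Prop :=
  ∀ (r : ℕ) (F : Fin r → Subgroup (Equiv.Perm α)), IsDDPDecomposition K F → r ≤ 1

/-!
Every `k ∈ H = ⨆ i, F i` is a product of components `f i ∈ F i`, and `k` agrees with `f i`
on `Supp (F i)`, since the other factors fix that set pointwise. If `k` lies in a factor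
`G j` of a second decomposition, each component is supported inside `Supp (G j)` and hence
lies in `G j`. So `G j` is the join of the pieces `G j ⊓ F i`, which have disjoint supports;
when `G j` is indecomposable all pieces but one are trivial, and `G j ≤ F i`. Applied in
both directions this gives `G j ≤ F i ≤ G j'`, and disjointness of supports forces `j = j'`:
the two finest decompositions have the same factors, not only the same supports.
-/

open Equiv Finset

section Supp

variable {α : Type*}

lemma disjoint_Supp_iff_le_fixingSubgroup {A : Subgroup (Perm α)} {S : Set α} :
    Disjoint (Supp A) S ↔ A ≤ fixingSubgroup (Perm α) S := by
  simp only [Set.disjoint_left, Supp, SetLike.le_def, mem_fixingSubgroup_iff, Perm.smul_def]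
  exact ⟨fun h a ha x hx => by_contra fun hax => h ⟨a, ha, hax⟩ hx,
    fun h x ⟨a, ha, hax⟩ hx => hax (h ha x hx)⟩

lemma Supp_mono {A B : Subgroup (Perm α)} (h : A ≤ B) : Supp A ⊆ Supp B :=
  fun _ ⟨a, ha, hax⟩ => ⟨a, h ha, hax⟩

lemma Supp_nonempty {A : Subgroup (Perm α)} (hA : A ≠ ⊥) : (Supp A).Nonempty := by
  by_contra! h
  refine hA ((Subgroup.eq_bot_iff_forall A).mpr fun a ha => Equiv.ext fun x => ?_)
  by_contra hx
  exact h.subset ⟨a, ha, hx⟩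

lemma apply_mem_Supp {A : Subgroup (Perm α)} {a : Perm α} (ha : a ∈ A) {x : α}
    (hx : x ∈ Supp A) : a x ∈ Supp A := by
  obtain ⟨b, hb, hbx⟩ := hx
  refine ⟨a * b * a⁻¹, A.mul_mem (A.mul_mem ha hb) (A.inv_mem ha), ?_⟩
  simpa using hbx

lemma commute_of_disjoint_Supp {A B : Subgroup (Perm α)} (h : Disjoint (Supp A) (Supp B))
    {a b : Perm α} (ha : a ∈ A) (hb : b ∈ B) : Commute a b :=
  Perm.Disjoint.commute fun _ => or_iff_not_imp_left.mpr fun hax =>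
    by_contra fun hbx => Set.disjoint_left.mp h ⟨a, ha, hax⟩ ⟨b, hb, hbx⟩

end Supp

section Factorization

variable {α ι : Type*} {F : ι → Subgroup (Perm α)}

/-- Only the `i`-th factor acts on `Supp (F i)`, which it preserves. -/
lemma noncommProd_apply_of_mem_Supp [DecidableEq ι]
    (hdisj : ∀ i j, i ≠ j → Disjoint (Supp (F i)) (Supp (F j)))
    {s : Finset ι} {f : ι → Perm α} (hf : ∀ i, f i ∈ F i) (comm) {i : ι} (hi : i ∈ s)
    {x : α} (hx : x ∈ Supp (F i)) : s.noncommProd f comm x = f i x := by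
  rw [← s.noncommProd_erase_mul hi f comm, Perm.mul_apply]
  have hrest : (s.erase i).noncommProd f (comm.mono (s.erase_subset i)) ∈
      fixingSubgroup (Perm α) (Supp (F i)) :=
    Subgroup.noncommProd_mem _ _ fun j hj =>
      disjoint_Supp_iff_le_fixingSubgroup.mp (hdisj j i (s.ne_of_mem_erase hj)) (hf j)
  exact (mem_fixingSubgroup_iff _).mp hrest _ (apply_mem_Supp (hf i) hx)

lemma exists_factorization_of_mem_iSup [Finite ι]
    (hdisj : ∀ i j, i ≠ j → Disjoint (Supp (F i)) (Supp (F j)))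
    {k : Perm α} (hk : k ∈ ⨆ i, F i) :
    ∃ f : ι → Perm α, (∀ i, f i ∈ F i) ∧ k ∈ Subgroup.closure (Set.range f) ∧
      ∀ i, ∀ x ∈ Supp (F i), k x = f i x := by
  classical
  cases nonempty_fintype ι
  have hcomm : Pairwise fun i j => ∀ x y : Perm α, x ∈ F i → y ∈ F j → Commute x y :=
    fun i j hij _ _ => commute_of_disjoint_Supp (hdisj i j hij)
  rw [← Subgroup.noncommPiCoprod_range (hcomm := hcomm)] at hk
  obtain ⟨f, rfl⟩ := hk
  refine ⟨fun i => f i, fun i => (f i).2, ?_, fun i x hx => ?_⟩ <;>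
    rw [Subgroup.noncommPiCoprod_apply]
  · exact Subgroup.noncommProd_mem _ _ fun i _ => Subgroup.subset_closure ⟨i, rfl⟩
  · exact noncommProd_apply_of_mem_Supp hdisj (fun i => (f i).2) _ (mem_univ i) hx

end Factorization

section Indecomposable

variable {α : Type*} {K : Subgroup (Perm α)}

lemma isDDPDecomposition_pair {A B : Subgroup (Perm α)} (hA : A ≠ ⊥) (hB : B ≠ ⊥)
    (hAB : Disjoint (Supp A) (Supp B)) : IsDDPDecomposition (A ⊔ B) ![A, B] := by
  refine ⟨fun i => ?_, fun i j hij => ?_, by simp [iSup, Matrix.range_cons, sup_comm]⟩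
  · fin_cases i <;> simpa
  · fin_cases i <;> fin_cases j <;> simp_all [hAB.symm]

lemma DDPIndecomposable.eq_bot_or_eq_bot (hK : DDPIndecomposable K) {A B : Subgroup (Perm α)}
    (hAB : Disjoint (Supp A) (Supp B)) (hsup : A ⊔ B = K) : A = ⊥ ∨ B = ⊥ := by
  by_contra! h
  have := hK 2 ![A, B] (hsup ▸ isDDPDecomposition_pair h.1 h.2 hAB)
  omega

lemma DDPIndecomposable.exists_eq_of_iSup_eq {ι : Type*} (hK : DDPIndecomposable K)
    (hK₀ : K ≠ ⊥) {M : ι → Subgroup (Perm α)}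
    (hdisj : ∀ i j, i ≠ j → Disjoint (Supp (M i)) (Supp (M j))) (hsup : ⨆ i, M i = K) :
    ∃ i, M i = K := by
  obtain ⟨i, hi⟩ : ∃ i, M i ≠ ⊥ := by
    by_contra! h
    exact hK₀ (by simp [← hsup, h])
  have hrest : Disjoint (Supp (M i)) (Supp (⨆ (j) (_ : j ≠ i), M j)) :=
    Disjoint.symm <| disjoint_Supp_iff_le_fixingSubgroup.mpr <| iSup₂_le fun j hj =>
      disjoint_Supp_iff_le_fixingSubgroup.mp (hdisj j i hj)
  rw [iSup_split_single M i] at hsup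
  refine ⟨i, ?_⟩
  rcases hK.eq_bot_or_eq_bot hrest hsup with h | h
  · exact absurd h hi
  · rwa [h, sup_bot_eq] at hsup

end Indecomposable

section Decomposition

variable {α : Type*} {H : Subgroup (Perm α)} {r s : ℕ} {F : Fin r → Subgroup (Perm α)}
  {G : Fin s → Subgroup (Perm α)}

lemma IsDDPDecomposition.mem_of_Supp_subset (hF : IsDDPDecomposition H F) {k : Perm α}
    (hk : k ∈ H) (i : Fin r) (hki : ∀ x, k x ≠ x → x ∈ Supp (F i)) : k ∈ F i := by
  obtain ⟨f, hfF, -, hf⟩ := exists_factorization_of_mem_iSup hF.2.1 (hF.2.2 ▸ hk)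
  suffices k = f i from this ▸ hfF i
  -- `k` agrees with its `i`-th component on `Supp (F i)`, and both fix every other point
  ext x
  by_cases hx : x ∈ Supp (F i)
  · exact hf i x hx
  · rw [not_imp_comm.mp (hki x) hx, eq_comm]
    exact not_imp_comm.mp (fun h => ⟨f i, hfF i, h⟩) hx

lemma IsDDPDecomposition.iSup_inf_eq (hF : IsDDPDecomposition H F)
    (hG : IsDDPDecomposition H G) (j : Fin s) : ⨆ i, G j ⊓ F i = G j := by
  refine le_antisymm (iSup_le fun i => inf_le_left) fun k hk => ?_
  have hkH : k ∈ H := hG.2.2 ▸ Subgroup.mem_iSup_of_mem j hk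
  obtain ⟨f, hfF, hkf, hf⟩ := exists_factorization_of_mem_iSup hF.2.1 (hF.2.2 ▸ hkH)
  refine (Subgroup.closure_le _).mpr (Set.range_subset_iff.mpr fun i => ?_) hkf
  refine Subgroup.mem_iSup_of_mem i ⟨?_, hfF i⟩
  refine hG.mem_of_Supp_subset (hF.2.2 ▸ Subgroup.mem_iSup_of_mem i (hfF i)) j fun x hx => ?_
  exact ⟨k, hk, (hf i x ⟨f i, hfF i, hx⟩).trans_ne hx⟩

lemma IsDDPDecomposition.eq_of_le (hG : IsDDPDecomposition H G) {j j' : Fin s}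
    (h : G j ≤ G j') : j = j' := by
  by_contra hne
  obtain ⟨x, hx⟩ := Supp_nonempty (hG.1 j)
  exact Set.disjoint_left.mp (hG.2.1 j j' hne) hx (Supp_mono h hx)

lemma IsDDPDecomposition.exists_le_of_indecomposable (hF : IsDDPDecomposition H F)
    (hG : IsDDPDecomposition H G) (hGind : ∀ j, DDPIndecomposable (G j)) (j : Fin s) :
    ∃ i, G j ≤ F i := by
  obtain ⟨i, hi⟩ := (hGind j).exists_eq_of_iSup_eq (hG.1 j)
    (fun i i' hii' => (hF.2.1 i i' hii').mono (Supp_mono inf_le_right) (Supp_mono inf_le_right))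
    (hF.iSup_inf_eq hG j)
  exact ⟨i, hi ▸ inf_le_right⟩

lemma IsDDPDecomposition.range_subset_of_finest (hF : IsDDPDecomposition H F)
    (hG : IsDDPDecomposition H G) (hFind : ∀ i, DDPIndecomposable (F i))
    (hGind : ∀ j, DDPIndecomposable (G j)) :
    Set.range G ⊆ Set.range F := by
  rintro _ ⟨j, rfl⟩
  obtain ⟨i, hji⟩ := hF.exists_le_of_indecomposable hG hGind j
  obtain ⟨j', hij'⟩ := hG.exists_le_of_indecomposable hF hFind i
  obtain rfl := hG.eq_of_le (hji.trans hij')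
  exact ⟨i, le_antisymm hij' hji⟩

end Decomposition

theorem stmt_8_general {α : Type*} (H : Subgroup (Equiv.Perm α)) {r s : ℕ}
    (F : Fin r → Subgroup (Equiv.Perm α)) (G : Fin s → Subgroup (Equiv.Perm α))
    (hF : IsDDPDecomposition H F) (hG : IsDDPDecomposition H G)
    (hFfinest : ∀ i, DDPIndecomposable (F i))
    (hGfinest : ∀ j, DDPIndecomposable (G j)) :
    (Set.range fun i => Supp (F i)) = Set.range fun j => Supp (G j) := by
  have hrange : Set.range F = Set.range G :=
    (hG.range_subset_of_finest hF hGfinest hFfinest).antisymm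
      (hF.range_subset_of_finest hG hFfinest hGfinest)
  rw [Set.range_comp' Supp F, Set.range_comp' Supp G, hrange]

/-- Any two finest disjoint direct product decompositions of
`H ≤ Sym(α)` (for `α` finite) are equivalent: the sets of supports of their
factors coincide. -/
theorem stmt_8 {α : Type*} [Finite α] (H : Subgroup (Equiv.Perm α)) {r s : ℕ}
    (F : Fin r → Subgroup (Equiv.Perm α)) (G : Fin s → Subgroup (Equiv.Perm α))
    (hF : IsDDPDecomposition H F) (hG : IsDDPDecomposition H G)
    (hFfinest : ∀ i, DDPIndecomposable (F i))
    (hGfinest : ∀ j, DDPIndecomposable (G j)) :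
    (Set.range fun i => Supp (F i)) = Set.range fun j => Supp (G j) :=
  stmt_8_general H F G hF hG hFfinest hGfinest
end

section
/- Let α be a finite set and H ≤ Sym(α). Let Δ, Γ, Ω ⊆ α be H-invariant sets with Γ ⊆ Δ and Ω ∩ Δ = ∅ (in the intended application, Δ is a union of H-orbits, Γ the union of the orbits in one cell of the finest decomposition of the restriction H|_Δ, and Ω is the next H-orbit). Assume that for every h ∈ H there exists g ∈ H with g(x) = h(x) for all x ∈ Γ and g(x) = x for all x ∈ Δ∖Γ. Then the following are equivalent: (i) for every h ∈ H there exists g ∈ H with g(x) = h(x) for all x ∈ Γ, g(x) = x for all x ∈ Δ∖Γ, and g(x) = x for all x ∈ Ω; (ii) for every h ∈ H fixing every point of Δ∖Γ there exists n ∈ H fixing every point of Δ such that n(x) = h(x) for all x ∈ Ω. -/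
/-!
For (i) ⇒ (ii), if `g` is the factor of `h` given by (i), then `n = h g⁻¹` fixes `Δ` and agrees
with `h` on `Ω`. For (ii) ⇒ (i), apply (ii) to the factor `g` of `h` given by the hypothesis to
obtain `n`; then `n⁻¹ g` is the required factor. Invariance enters only on `Γ`: since `h` maps `Γ`
onto itself, so does any `g` agreeing with `h` there, which makes `h g⁻¹` trivial on `Γ` and
`n⁻¹ g` equal to `g` on `Γ`.
-/

open Set

namespace Equiv.Perm

variable {α : Type*} {g h n : Perm α} {s t : Set α}

theorem eqOn_mul_inv_id_of_eqOn (hgh : EqOn g h s) (hs : s ⊆ h '' s) :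
    EqOn (h * g⁻¹) id s := by
  rintro _ hx
  obtain ⟨y, hy, rfl⟩ := hs hx
  rw [mul_apply, ← hgh hy, inv_eq_iff_eq.2 rfl, hgh hy, id]

theorem eqOn_mul_inv_of_eqOn_id (hg : EqOn g id s) : EqOn (h * g⁻¹) h s := fun x hx => by
  rw [mul_apply, (Function.IsFixedPt.perm_inv (hg hx)).eq]

theorem eqOn_inv_mul_of_mapsTo (hn : EqOn n id t) (hg : MapsTo g s t) :
    EqOn (n⁻¹ * g) g s := fun x hx => by
  rw [mul_apply, (Function.IsFixedPt.perm_inv (hn (hg hx))).eq]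

theorem eqOn_inv_mul_id_of_eqOn (hng : EqOn n g s) : EqOn (n⁻¹ * g) id s := fun _ hx =>
  inv_eq_iff_eq.2 (hng hx).symm

end Equiv.Perm

open Equiv.Perm

theorem stmt_9_general {α : Type*} (H : Subgroup (Equiv.Perm α))
    (Δ Γ Ω : Set α) (hΓΔ : Γ ⊆ Δ)
    (hΓinv : ∀ h ∈ H, (⇑h) '' Γ = Γ)
    (hfac : ∀ h ∈ H, ∃ g ∈ H, (∀ x ∈ Γ, g x = h x) ∧ ∀ x ∈ Δ \ Γ, g x = x) :
    (∀ h ∈ H, ∃ g ∈ H,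
        (∀ x ∈ Γ, g x = h x) ∧ (∀ x ∈ Δ \ Γ, g x = x) ∧ ∀ x ∈ Ω, g x = x) ↔
      (∀ h ∈ H, (∀ x ∈ Δ \ Γ, h x = x) →
        ∃ n ∈ H, (∀ x ∈ Δ, n x = x) ∧ ∀ x ∈ Ω, n x = h x) := by
  constructor
  · intro hi h hH hfix
    obtain ⟨g, hgH, hgΓ, hgΔΓ, hgΩ⟩ := hi h hH
    have hΓ : EqOn (h * g⁻¹) id Γ := eqOn_mul_inv_id_of_eqOn hgΓ (hΓinv h hH).superset
    have hΔΓ : EqOn (h * g⁻¹) id (Δ \ Γ) := (eqOn_mul_inv_of_eqOn_id hgΔΓ).trans hfix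
    exact ⟨h * g⁻¹, mul_mem hH (inv_mem hgH), (hΔΓ.union hΓ).mono (subset_sdiff_union Δ Γ),
      eqOn_mul_inv_of_eqOn_id hgΩ⟩
  · intro hii h hH
    obtain ⟨g, hgH, hgΓ, hgΔΓ⟩ := hfac h hH
    obtain ⟨n, hnH, hnΔ, hnΩ⟩ := hii g hgH hgΔΓ
    have hgΓΔ : MapsTo g Γ Δ :=
      (mapsTo_image g Γ).mono_right (((EqOn.image_eq hgΓ).trans (hΓinv h hH)).trans_subset hΓΔ)
    have hgΔΓΔ : MapsTo g (Δ \ Γ) Δ := ((mapsTo_id Δ).mono_left sdiff_subset).congr (EqOn.symm hgΔΓ)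
    exact ⟨n⁻¹ * g, mul_mem (inv_mem hnH) hgH, (eqOn_inv_mul_of_mapsTo hnΔ hgΓΔ).trans hgΓ,
      (eqOn_inv_mul_of_mapsTo hnΔ hgΔΓΔ).trans hgΔΓ, eqOn_inv_mul_id_of_eqOn hnΩ⟩

/-- Let `H ≤ Sym(α)` (`α` finite) and let `Δ, Γ, Ω ⊆ α` be
`H`-invariant sets with `Γ ⊆ Δ` and `Ω ∩ Δ = ∅`.  Assume that for every `h ∈ H`
there is `g ∈ H` agreeing with `h` on `Γ` and fixing `Δ ∖ Γ` pointwise.  Then: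
(i) for every `h ∈ H` there is `g ∈ H` agreeing with `h` on `Γ`, fixing `Δ ∖ Γ`
pointwise and fixing `Ω` pointwise, if and only if
(ii) for every `h ∈ H` fixing `Δ ∖ Γ` pointwise there is `n ∈ H` fixing `Δ`
pointwise and agreeing with `h` on `Ω`. -/
theorem stmt_9 {α : Type*} [Finite α] (H : Subgroup (Equiv.Perm α))
    (Δ Γ Ω : Set α) (hΓΔ : Γ ⊆ Δ) (hΩΔ : Ω ∩ Δ = ∅)
    (hΔinv : ∀ h ∈ H, (⇑h) '' Δ = Δ)
    (hΓinv : ∀ h ∈ H, (⇑h) '' Γ = Γ)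
    (hΩinv : ∀ h ∈ H, (⇑h) '' Ω = Ω)
    (hfac : ∀ h ∈ H, ∃ g ∈ H, (∀ x ∈ Γ, g x = h x) ∧ ∀ x ∈ Δ \ Γ, g x = x) :
    (∀ h ∈ H, ∃ g ∈ H,
        (∀ x ∈ Γ, g x = h x) ∧ (∀ x ∈ Δ \ Γ, g x = x) ∧ ∀ x ∈ Ω, g x = x) ↔
      (∀ h ∈ H, (∀ x ∈ Δ \ Γ, h x = x) →
        ∃ n ∈ H, (∀ x ∈ Δ, n x = x) ∧ ∀ x ∈ Ω, n x = h x) :=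
  stmt_9_general H Δ Γ Ω hΓΔ hΓinv hfac
end
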